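/- Let A ∈ S_{d,K} and C ∈ R^{d×d} symmetric with AᵀC²A invertible. If (I_d − AAᵀ)CA = 0, then CA(AᵀC²A)^{−1/2} = A, i.e., A is a fixed point of the update A ↦ CA(AᵀC²A)^{−1/2}. -/

import Mathlib

/-! The hypothesis says `C * A = A * (Aᵀ * C * A)`, hence `Aᵀ * C * C * A = (Aᵀ * C * A) ^ 2`.
Its positive square root is therefore the positive definite `Aᵀ * C * A`, which cancels against
the factor `Aᵀ * C * A` of `C * A`. -/

open Matrix

open scoped ComplexOrder in
/-- The positive semidefinite square root of a positive semidefinite matrix, as defined in the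
older Mathlib (`Matrix.PosSemidef.sqrt`, since removed). -/
noncomputable def Matrix.PosSemidef.sqrt {n 𝕜 : Type*} [Fintype n] [RCLike 𝕜] [DecidableEq n]
    {A : Matrix n n 𝕜} (hA : A.PosSemidef) : Matrix n n 𝕜 :=
  hA.isHermitian.eigenvectorUnitary.1 * diagonal ((↑) ∘ (√·) ∘ hA.isHermitian.eigenvalues) *
  (star hA.isHermitian.eigenvectorUnitary : Matrix n n 𝕜)

section

open scoped ComplexOrder

namespace Matrix.PosSemidef

variable {n 𝕜 : Type*} [Fintype n] [RCLike 𝕜] [DecidableEq n]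

theorem sqrt_eq_cfc {A : Matrix n n 𝕜} (hA : A.PosSemidef) : hA.sqrt = cfc Real.sqrt A := by
  rw [hA.isHermitian.cfc_eq, IsHermitian.cfc, Unitary.conjStarAlgAut_apply]
  rfl

theorem sqrt_eq_of_sq_eq {A B : Matrix n n 𝕜} (hA : A.PosSemidef) (hB : B.PosSemidef)
    (hBA : B ^ 2 = A) : hA.sqrt = B := by
  have hBsa : IsSelfAdjoint B := hB.isHermitian
  subst hBA
  rw [sqrt_eq_cfc, ← cfc_pow_id (R := ℝ) B 2 hBsa,
    ← cfc_comp' Real.sqrt (· ^ 2) B (by fun_prop) (by fun_prop) hBsa]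
  conv_rhs => rw [← cfc_id' ℝ B hBsa]
  refine cfc_congr fun x hx => ?_
  rw [hB.isHermitian.spectrum_real_eq_range_eigenvalues] at hx
  obtain ⟨i, rfl⟩ := hx
  exact Real.sqrt_sq (hB.eigenvalues_nonneg i)

end Matrix.PosSemidef

end

theorem stmt9_general {d K : ℕ} (A : Matrix (Fin d) (Fin K) ℝ) (C : Matrix (Fin d) (Fin d) ℝ)
    (hP : (Aᵀ * C * C * A).PosDef) (hS : (Aᵀ * C * A).PosDef)
    (h : (1 - A * Aᵀ) * C * A = 0) :
    C * A * (hP.posSemidef.sqrt)⁻¹ = A := by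
  have hCA : C * A = A * (Aᵀ * C * A) := by
    rw [Matrix.mul_assoc, Matrix.sub_mul, Matrix.one_mul, sub_eq_zero] at h
    simpa only [Matrix.mul_assoc] using h
  have hsq : (Aᵀ * C * A) ^ 2 = Aᵀ * C * C * A := by
    rw [sq, Matrix.mul_assoc (Aᵀ * C) C A, hCA, Matrix.mul_assoc _ A]
  rw [hP.posSemidef.sqrt_eq_of_sq_eq hS.posSemidef hsq, hCA, Matrix.mul_assoc,
    mul_nonsing_inv _ ((isUnit_iff_isUnit_det _).mp hS.isUnit), Matrix.mul_one]

theorem stmt9 {d K : ℕ} (A : Matrix (Fin d) (Fin K) ℝ) (C : Matrix (Fin d) (Fin d) ℝ)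
    (hA : Aᵀ * A = 1) (hC : Cᵀ = C)
    (hP : (Aᵀ * C * C * A).PosDef) (hS : (Aᵀ * C * A).PosDef)
    (h : (1 - A * Aᵀ) * C * A = 0) :
    C * A * (hP.posSemidef.sqrt)⁻¹ = A :=
  stmt9_general A C hP hS h
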